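/- Fix ρ > 0 and set f_opt = (1 + σw²/(σx²·ρ)) · x/‖x‖². Then f_opt is a global minimizer of the zeroth-order symbol-estimate MSE with random channel: for every nonzero filter f ∈ ℂ^B, M_rc(f_opt) ≤ M_rc(f). -/

import Mathlib

open MeasureTheory

/-- `φ(f) = fᴴ x = Σᵢ conj(fᵢ)·xᵢ`. -/
noncomputable def phi {B : ℕ} (x f : Fin B → ℂ) : ℂ :=
  ∑ i, (starRingEnd ℂ) (f i) * x i

/-- Squared Euclidean norm `‖f‖² = Σᵢ |fᵢ|²`. -/
noncomputable def nsq {B : ℕ} (f : Fin B → ℂ) : ℝ :=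
  ∑ i, Complex.normSq (f i)

/-- Zeroth-order symbol-estimate MSE of the ZF equalizer, random channel with
prior second moment `ρ = E[|h|²]`. -/
noncomputable def Mrc {B : ℕ} (σx2 σw2 ρ : ℝ) (x f : Fin B → ℂ) : ℝ :=
  (σx2 * (ρ * Complex.normSq (phi x f - 1) + σw2 * nsq f) + σw2) /
    (ρ * Complex.normSq (phi x f) + σw2 * nsq f)

/-- The optimal filter `f_opt = (1 + σw²/(σx²·ρ)) · x/‖x‖²` for the random channel case. -/
noncomputable def fOptRc {B : ℕ} (σx2 σw2 ρ : ℝ) (x : Fin B → ℂ) : Fin B → ℂ :=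
  fun i => ((1 + σw2 / (σx2 * ρ) : ℝ) : ℂ) * (x i / (nsq x : ℂ))

/-! With `s = σx²ρ`, `K = s + σw²`, `t = Re φ(f)` and `D = ρ|φ(f)|² + σw²‖f‖²` one has
`M_rc(f) = σx² + (K - 2st)/D`. Cauchy–Schwarz gives `|φ(f)|² ≤ ‖x‖²‖f‖²`, hence
`t²(ρ‖x‖² + σw²) ≤ ‖x‖² D`, and then `(K - 2st)/D ≥ -s²‖x‖²/(K(ρ‖x‖² + σw²))` reduces to
`(K - st)² ≥ 0`. The right-hand side is the value at `f_opt`, where `φ = K/s`. -/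

lemma neg_div_le_sub_div_of_sq_mul_le {s K L X t D : ℝ} (hK : 0 < K) (hL : 0 < L) (hD : 0 < D)
    (h : t ^ 2 * L ≤ X * D) : -(s ^ 2 * X / (K * L)) ≤ (K - 2 * s * t) / D := by
  rw [← neg_div, div_le_div_iff₀ (by positivity) hD]
  nlinarith [mul_le_mul_of_nonneg_left h (sq_nonneg s), mul_nonneg hL.le (sq_nonneg (K - s * t))]

section
variable {B : ℕ}

lemma phi_eq_inner (x f : Fin B → ℂ) :
    phi x f = inner ℂ (WithLp.toLp 2 f : EuclideanSpace ℂ (Fin B)) (WithLp.toLp 2 x) := by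
  simp [phi, PiLp.inner_apply, mul_comm]

lemma nsq_eq_norm_sq (f : Fin B → ℂ) :
    nsq f = ‖(WithLp.toLp 2 f : EuclideanSpace ℂ (Fin B))‖ ^ 2 := by
  simp [nsq, EuclideanSpace.norm_sq_eq, Complex.sq_norm]

lemma nsq_pos {f : Fin B → ℂ} (hf : f ≠ 0) : 0 < nsq f := by
  rw [nsq_eq_norm_sq]
  have : (WithLp.toLp 2 f : EuclideanSpace ℂ (Fin B)) ≠ 0 := by simpa using hf
  positivity

lemma normSq_phi_le (x f : Fin B → ℂ) : Complex.normSq (phi x f) ≤ nsq x * nsq f := by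
  rw [← Complex.sq_norm, phi_eq_inner, nsq_eq_norm_sq, nsq_eq_norm_sq, ← mul_pow, mul_comm (‖_‖)]
  exact pow_le_pow_left₀ (norm_nonneg _) (norm_inner_le_norm _ _) 2

lemma sq_re_phi_mul_le {ρ σw2 : ℝ} (hρ : 0 ≤ ρ) (hσw : 0 ≤ σw2) (x f : Fin B → ℂ) :
    (phi x f).re ^ 2 * (ρ * nsq x + σw2) ≤ nsq x * (ρ * Complex.normSq (phi x f) + σw2 * nsq f) := by
  have hre : (phi x f).re ^ 2 ≤ Complex.normSq (phi x f) := by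
    rw [Complex.normSq_apply]; nlinarith [sq_nonneg (phi x f).im]
  have hcs := normSq_phi_le x f
  have hX : 0 ≤ nsq x := by
    rw [nsq_eq_norm_sq]; positivity
  nlinarith [mul_le_mul_of_nonneg_left hre (mul_nonneg hρ hX), mul_le_mul_of_nonneg_left hre hσw,
    mul_le_mul_of_nonneg_left hcs hσw]

lemma phi_real_smul_div_nsq {x : Fin B → ℂ} (hx : x ≠ 0) (c : ℝ) :
    phi x (fun i => (c : ℂ) * (x i / (nsq x : ℂ))) = c := by
  have hX : (nsq x : ℂ) ≠ 0 := by exact_mod_cast (nsq_pos hx).ne'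
  have hxx : phi x x = nsq x := by simp [phi, nsq, Complex.normSq_eq_conj_mul_self]
  calc phi x (fun i => (c : ℂ) * (x i / (nsq x : ℂ))) = c / nsq x * phi x x := by
        simp only [phi, Finset.mul_sum, map_mul, map_div₀, Complex.conj_ofReal]
        congr 1; ext i; ring
    _ = c := by rw [hxx]; field_simp

lemma nsq_real_smul_div_nsq {x : Fin B → ℂ} (hx : x ≠ 0) (c : ℝ) :
    nsq (fun i => (c : ℂ) * (x i / (nsq x : ℂ))) = c ^ 2 / nsq x := by
  have hX := (nsq_pos hx).ne'
  calc nsq (fun i => (c : ℂ) * (x i / (nsq x : ℂ)))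
        = ∑ i, c ^ 2 / nsq x ^ 2 * Complex.normSq (x i) := Finset.sum_congr rfl fun i _ => by
          rw [Complex.normSq_mul, Complex.normSq_div, Complex.normSq_ofReal, Complex.normSq_ofReal]
          ring
    _ = c ^ 2 / nsq x := by
          rw [← Finset.mul_sum]
          change c ^ 2 / nsq x ^ 2 * nsq x = _
          field_simp

lemma Mrc_eq {σx2 σw2 ρ : ℝ} {x f : Fin B → ℂ}
    (hD : ρ * Complex.normSq (phi x f) + σw2 * nsq f ≠ 0) :
    Mrc σx2 σw2 ρ x f = σx2 + (σx2 * ρ + σw2 - 2 * (σx2 * ρ) * (phi x f).re) /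
      (ρ * Complex.normSq (phi x f) + σw2 * nsq f) := by
  have h : Complex.normSq (phi x f - 1) = Complex.normSq (phi x f) - 2 * (phi x f).re + 1 := by
    simp only [Complex.normSq_apply, Complex.sub_re, Complex.sub_im, Complex.one_re, Complex.one_im]
    ring
  rw [Mrc, h, eq_comm, add_div' _ _ _ hD]
  congr 1; ring

lemma Mrc_fOptRc {σx2 σw2 ρ : ℝ} (hσx : 0 < σx2) (hσw : 0 < σw2) (hρ : 0 < ρ)
    {x : Fin B → ℂ} (hx : x ≠ 0) :
    Mrc σx2 σw2 ρ x (fOptRc σx2 σw2 ρ x) =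
      σx2 - (σx2 * ρ) ^ 2 * nsq x / ((σx2 * ρ + σw2) * (ρ * nsq x + σw2)) := by
  have hX := nsq_pos hx
  have hL : 0 < ρ * nsq x + σw2 := by positivity
  have h1 : Complex.normSq (((1 + σw2 / (σx2 * ρ) : ℝ) : ℂ) - 1) = (σw2 / (σx2 * ρ)) ^ 2 := by
    rw [← Complex.ofReal_one, ← Complex.ofReal_sub, Complex.normSq_ofReal, add_sub_cancel_left, sq]
  unfold fOptRc
  rw [Mrc, phi_real_smul_div_nsq hx, nsq_real_smul_div_nsq hx, Complex.normSq_ofReal, h1]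
  field_simp
  ring

theorem fopt_optimal_zeroth_order_rc_mse_general
    (B : ℕ) (x : Fin B → ℂ) (hx : x ≠ 0)
    (σx2 σw2 : ℝ) (hσx : 0 < σx2) (hσw : 0 < σw2)
    (ρ : ℝ) (hρ : 0 < ρ) :
    ∀ f : Fin B → ℂ, f ≠ 0 →
      Mrc σx2 σw2 ρ x (fOptRc σx2 σw2 ρ x) ≤ Mrc σx2 σw2 ρ x f := by
  intro f hf
  have hD : 0 < ρ * Complex.normSq (phi x f) + σw2 * nsq f :=
    add_pos_of_nonneg_of_pos (mul_nonneg hρ.le (Complex.normSq_nonneg _)) (mul_pos hσw (nsq_pos hf))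
  have hK : 0 < σx2 * ρ + σw2 := by positivity
  have hL : 0 < ρ * nsq x + σw2 := add_pos (mul_pos hρ (nsq_pos hx)) hσw
  rw [Mrc_fOptRc hσx hσw hρ hx, Mrc_eq hD.ne', sub_eq_add_neg]
  gcongr
  exact neg_div_le_sub_div_of_sq_mul_le hK hL hD (sq_re_phi_mul_le hρ.le hσw.le x f)

/-- `f_opt = (1 + σw²/(σx²·ρ)) · x/‖x‖²` is a global minimizer of the
zeroth-order symbol-estimate MSE `[MSE_x^rc(ZF)]₀`. -/
theorem fopt_optimal_zeroth_order_rc_mse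
    (B : ℕ) (hB : 1 ≤ B) (x : Fin B → ℂ) (hx : x ≠ 0)
    (σx2 σw2 : ℝ) (hσx : 0 < σx2) (hσw : 0 < σw2)
    (ρ : ℝ) (hρ : 0 < ρ) :
    ∀ f : Fin B → ℂ, f ≠ 0 →
      Mrc σx2 σw2 ρ x (fOptRc σx2 σw2 ρ x) ≤ Mrc σx2 σw2 ρ x f :=
  fopt_optimal_zeroth_order_rc_mse_general B x hx σx2 σw2 hσx hσw ρ hρ
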